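/- Let t > 1, 0 < δ < 1, Λ ≥ 0, and λ_c := t^{δ−1}/(1−t^{δ−1}). Let G be holomorphic on an open neighbourhood of the ray R := {r e^{iπ/4} : r ≥ 0}, and suppose there are constants A > 0 and p ≥ 0 with |G(u)| ≤ A(1+|u|)^p and |G′(u)| ≤ A(1+|u|)^p for all u ∈ R. Then all the following integrals converge absolutely and ∫_R G(u)·exp((i λ_c t/2)(u² + (2 ln(1+Λ)/(1+λ_c))·u)) du = G(0)·Φ(0;t,Λ) + ∫_R G′(u)·Φ(u;t,Λ) du. -/

import Mathlib

/-!
On the ray `u = s e^{iπ/4}` one has `u² = i s²`, so the phase becomes `exp(-a s² + β s)` with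
`a = λ_c t / 2 > 0`: it decays like a Gaussian, and so does its tail `F(s) = ∫_s^∞`, which is
`e^{-iπ/4} Φ(s e^{iπ/4})` after translating the ray. The identity is then integration by parts on
`[0, ∞)` against `F' = -phase`; the boundary term at infinity vanishes because polynomial growth
times Gaussian decay tends to zero, and every integrand is dominated by a Gaussian.
-/

open MeasureTheory

noncomputable section

/-- The unit direction `e^{iπ/4}`. -/
def e4 : ℂ := Complex.exp (Complex.I * (Real.pi / 4 : ℝ))

/-- The ray `{r e^{iπ/4} : r ≥ 0}`. -/
def ray : Set ℂ := {z : ℂ | ∃ r : ℝ, 0 ≤ r ∧ z = (r : ℂ) * e4}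

/-- `λ_c := t^(δ-1)/(1-t^(δ-1))`. -/
def lamc (δ t : ℝ) : ℝ := t ^ (δ - 1) / (1 - t ^ (δ - 1))

/-- The exponential factor `exp((i λ_c t/2)(v² + (2 ln(1+Λ)/(1+λ_c))·v))`. -/
def phase (δ t Λ : ℝ) (v : ℂ) : ℂ :=
  Complex.exp (Complex.I * ((lamc δ t * t / 2 : ℝ) : ℂ) *
    (v ^ 2 + ((2 * Real.log (1 + Λ) / (1 + lamc δ t) : ℝ) : ℂ) * v))

/-- `Φ(u;t,Λ)`: integral of the phase over the ray `{u + r e^{iπ/4} : r ≥ 0}`. -/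
def Phi (δ t Λ : ℝ) (u : ℂ) : ℂ :=
  ∫ r in Set.Ioi (0 : ℝ), e4 * phase δ t Λ (u + (r : ℂ) * e4)

open Set Filter Real
open scoped Topology

lemma exp_mul_mul_exp_neg_mul_sq_le {b : ℝ} (hb : 0 < b) (c s : ℝ) :
    exp (c * s) * exp (-b * s ^ 2) ≤ exp (c ^ 2 / (2 * b)) * exp (-(b / 2) * s ^ 2) := by
  rw [← exp_add, ← exp_add, exp_le_exp, ← sub_nonneg]
  have : c ^ 2 / (2 * b) + -(b / 2) * s ^ 2 - (c * s + -b * s ^ 2) = (b * s - c) ^ 2 / (2 * b) := by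
    field_simp
    ring
  rw [this]
  positivity

lemma one_add_rpow_le_exp {s : ℝ} (hs : 0 ≤ s) (p : ℝ) : (1 + s) ^ p ≤ exp (|p| * s) := by
  rw [rpow_def_of_pos (by linarith), exp_le_exp]
  have hlog₀ : 0 ≤ log (1 + s) := log_nonneg (by linarith)
  have hlog : log (1 + s) ≤ s := by linarith [log_le_sub_one_of_pos (by linarith : 0 < 1 + s)]
  calc log (1 + s) * p ≤ log (1 + s) * |p| := mul_le_mul_of_nonneg_left (le_abs_self p) hlog₀
    _ ≤ |p| * s := by nlinarith [abs_nonneg p]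

def HasGaussianDecay (f : ℝ → ℂ) : Prop :=
  ∃ C b : ℝ, 0 < b ∧ ∀ s, 0 ≤ s → ‖f s‖ ≤ C * exp (-b * s ^ 2)

namespace HasGaussianDecay

variable {f g : ℝ → ℂ}

lemma integrableOn (hf : HasGaussianDecay f) (hc : ContinuousOn f (Ici 0)) :
    IntegrableOn f (Ioi 0) := by
  obtain ⟨C, b, hb, hfb⟩ := hf
  refine ((integrable_exp_neg_mul_sq hb).const_mul C).integrableOn.mono' ?_ ?_
  · exact (hc.mono Ioi_subset_Ici_self).aestronglyMeasurable measurableSet_Ioi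
  · filter_upwards [ae_restrict_mem measurableSet_Ioi] with s hs using hfb s hs.le

lemma tendsto_atTop (hf : HasGaussianDecay f) : Tendsto f atTop (𝓝 0) := by
  obtain ⟨C, b, hb, hfb⟩ := hf
  have hgauss : Tendsto (fun s : ℝ => C * exp (-b * s ^ 2)) atTop (𝓝 0) := by
    simpa using (tendsto_exp_atBot.comp ((tendsto_pow_atTop two_ne_zero).const_mul_atTop_of_neg
      (neg_lt_zero.2 hb))).const_mul C
  exact squeeze_zero_norm' ((eventually_ge_atTop 0).mono hfb) hgauss

lemma mul_of_norm_le_rpow (hf : HasGaussianDecay f) {A p : ℝ}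
    (hg : ∀ s, 0 ≤ s → ‖g s‖ ≤ A * (1 + s) ^ p) :
    HasGaussianDecay (fun s => g s * f s) := by
  obtain ⟨C, b, hb, hfb⟩ := hf
  have hA : 0 ≤ A := by simpa using (norm_nonneg _).trans (hg 0 le_rfl)
  have hC : 0 ≤ C := by simpa using (norm_nonneg _).trans (hfb 0 le_rfl)
  refine ⟨A * C * exp (|p| ^ 2 / (2 * b)), b / 2, by positivity, fun s hs => ?_⟩
  calc ‖g s * f s‖ = ‖g s‖ * ‖f s‖ := norm_mul _ _
    _ ≤ (A * (1 + s) ^ p) * (C * exp (-b * s ^ 2)) :=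
        mul_le_mul (hg s hs) (hfb s hs) (norm_nonneg _) (by positivity)
    _ ≤ (A * exp (|p| * s)) * (C * exp (-b * s ^ 2)) := by
        gcongr
        exact one_add_rpow_le_exp hs p
    _ = A * C * (exp (|p| * s) * exp (-b * s ^ 2)) := by ring
    _ ≤ A * C * (exp (|p| ^ 2 / (2 * b)) * exp (-(b / 2) * s ^ 2)) :=
        mul_le_mul_of_nonneg_left (exp_mul_mul_exp_neg_mul_sq_le hb _ _) (by positivity)
    _ = _ := by ring

lemma integral_Ioi (hf : HasGaussianDecay f) :
    HasGaussianDecay (fun s => ∫ x in Ioi s, f x) := by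
  obtain ⟨C, b, hb, hfb⟩ := hf
  have hC : 0 ≤ C := by simpa using (norm_nonneg _).trans (hfb 0 le_rfl)
  refine ⟨C * √(π / (b / 2)), b / 2, by positivity, fun s hs => ?_⟩
  set bound : ℝ → ℝ := fun x => C * exp (-(b / 2) * s ^ 2) * exp (-(b / 2) * x ^ 2)
  have hbound : Integrable bound := (integrable_exp_neg_mul_sq (by positivity)).const_mul _
  have hdom : ∀ x ∈ Ioi s, ‖f x‖ ≤ bound x := by
    intro x hx
    refine (hfb x (hs.trans hx.out.le)).trans ?_
    have : s ^ 2 ≤ x ^ 2 := pow_le_pow_left₀ hs hx.out.le 2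
    simp only [bound, mul_assoc, ← exp_add]
    gcongr
    nlinarith
  calc ‖∫ x in Ioi s, f x‖ ≤ ∫ x in Ioi s, bound x :=
        norm_integral_le_of_norm_le hbound.integrableOn
          ((ae_restrict_iff' measurableSet_Ioi).2 (Eventually.of_forall hdom))
    _ ≤ ∫ x, bound x :=
        setIntegral_le_integral hbound (Eventually.of_forall fun x => by positivity)
    _ = C * √(π / (b / 2)) * exp (-(b / 2) * s ^ 2) := by
        simp only [bound, integral_const_mul, integral_gaussian]
        ring

lemma integrableOn_mul (hf : HasGaussianDecay f) (hfc : ContinuousOn f (Ici 0))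
    (hgc : ContinuousOn g (Ici 0)) {A p : ℝ}
    (hg : ∀ s, 0 ≤ s → ‖g s‖ ≤ A * (1 + s) ^ p) :
    IntegrableOn (fun s => g s * f s) (Ioi 0) :=
  (hf.mul_of_norm_le_rpow hg).integrableOn (hgc.mul hfc)

end HasGaussianDecay

lemma hasGaussianDecay_cexp {b : ℝ} (hb : 0 < b) (β : ℂ) :
    HasGaussianDecay fun s : ℝ => Complex.exp (-b * s ^ 2 + β * s) := by
  refine ⟨exp (β.re ^ 2 / (2 * b)), b / 2, by positivity, fun s _ => ?_⟩
  have hre : (-b * (s : ℂ) ^ 2 + β * s).re = β.re * s + -b * s ^ 2 := by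
    simp only [← Complex.ofReal_pow, neg_mul, Complex.add_re, Complex.neg_re, Complex.mul_re,
      Complex.ofReal_re, Complex.ofReal_im, mul_zero, sub_zero]
    ring
  rw [Complex.norm_exp, hre, exp_add]
  exact exp_mul_mul_exp_neg_mul_sq_le hb _ _

lemma hasDerivAt_integral_Ioi {f : ℝ → ℂ} (hf : Continuous f) {a : ℝ}
    (hint : IntegrableOn f (Ioi a)) (x : ℝ) :
    HasDerivAt (fun s => ∫ y in Ioi s, f y) (-f x) x := by
  have hint' : ∀ s, IntegrableOn f (Ioi s) := fun s =>
    (hf.continuousOn.integrableOn_Icc.union hint).mono_set fun y hy => by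
      rcases le_or_gt y a with h | h
      exacts [Or.inl ⟨hy.out.le, h⟩, Or.inr h]
  have htail :
      (fun s => ∫ y in Ioi s, f y) = fun s => (∫ y in Ioi a, f y) - ∫ y in a..s, f y := by
    funext s
    rw [← intervalIntegral.integral_Ioi_sub_Ioi' hint (hint' s), sub_sub_cancel]
  rw [htail]
  exact (hf.integral_hasStrictDerivAt a x).hasDerivAt.const_sub _

lemma continuous_integral_Ioi {f : ℝ → ℂ} (hf : Continuous f) {a : ℝ}
    (hint : IntegrableOn f (Ioi a)) : Continuous fun s => ∫ y in Ioi s, f y :=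
  continuous_iff_continuousAt.2 fun x => (hasDerivAt_integral_Ioi hf hint x).continuousAt

theorem integral_Ioi_mul_eq_add_integral_mul_integral_Ioi {f g g' : ℝ → ℂ} {A p : ℝ}
    (hf : Continuous f) (hfd : HasGaussianDecay f)
    (hg : ∀ s, 0 ≤ s → HasDerivAt g (g' s) s) (hg'c : ContinuousOn g' (Ici 0))
    (hgb : ∀ s, 0 ≤ s → ‖g s‖ ≤ A * (1 + s) ^ p)
    (hg'b : ∀ s, 0 ≤ s → ‖g' s‖ ≤ A * (1 + s) ^ p) :
    ∫ s in Ioi 0, g s * f s =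
      g 0 * (∫ s in Ioi 0, f s) + ∫ s in Ioi 0, g' s * ∫ x in Ioi s, f x := by
  set F := fun s => ∫ x in Ioi s, f x
  have hfi := hfd.integrableOn hf.continuousOn
  have hF : ∀ x, HasDerivAt F (-f x) x := hasDerivAt_integral_Ioi hf hfi
  have hFc : Continuous F := continuous_integral_Ioi hf hfi
  have hgc : ContinuousOn g (Ici 0) := fun s hs => (hg s hs).continuousAt.continuousWithinAt
  have hgf := hfd.integrableOn_mul hf.continuousOn hgc hgb
  have hg'F := hfd.integral_Ioi.integrableOn_mul hFc.continuousOn hg'c hg'b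
  have ibp := integral_Ioi_mul_deriv_eq_deriv_mul (fun x hx => hg x hx.out.le) (fun x _ => hF x)
    (by simpa only [Pi.mul_def, Pi.neg_def, mul_neg] using hgf.neg) hg'F
    (((hg 0 le_rfl).continuousAt.mul (hF 0).continuousAt).tendsto.mono_left nhdsWithin_le_nhds)
    (hfd.integral_Ioi.mul_of_norm_le_rpow hgb).tendsto_atTop
  simp only [Pi.mul_apply, mul_neg, integral_neg] at ibp
  linear_combination -ibp

lemma setIntegral_Ioi_zero_comp_const_add {E : Type*} [NormedAddCommGroup E] [NormedSpace ℝ E]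
    (h : ℝ → E) (s : ℝ) : ∫ r in Ioi 0, h (s + r) = ∫ x in Ioi s, h x := by
  simpa [preimage_const_add_Ioi] using
    (measurePreserving_add_left volume s).setIntegral_preimage_emb
      (measurableEmbedding_addLeft s) h (Ioi s)

lemma IntegrableOn.comp_const_add_Ioi {E : Type*} [NormedAddCommGroup E] {h : ℝ → E} {s : ℝ}
    (hh : IntegrableOn h (Ioi s)) : IntegrableOn (fun r => h (s + r)) (Ioi 0) := by
  have := ((measurePreserving_add_left volume s).integrableOn_comp_preimage
    (measurableEmbedding_addLeft s)).2 hh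
  rwa [preimage_const_add_Ioi, sub_self] at this

lemma hasDerivAt_comp_ofReal_mul {G : ℂ → ℂ} {w : ℂ} {s : ℝ}
    (hG : DifferentiableAt ℂ G (s * w)) :
    HasDerivAt (fun r : ℝ => G (r * w)) (deriv G (s * w) * w) s := by
  simpa using (hG.hasDerivAt.comp (s : ℂ) ((hasDerivAt_id _).mul_const w)).comp_ofReal

lemma e4_sq : e4 ^ 2 = Complex.I := by
  rw [e4, ← Complex.exp_nat_mul]
  convert Complex.exp_pi_div_two_mul_I using 2
  push_cast
  ring

lemma norm_e4 : ‖e4‖ = 1 := by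
  simp [e4, Complex.norm_exp]

lemma norm_ofReal_mul_e4 {s : ℝ} (hs : 0 ≤ s) : ‖(s : ℂ) * e4‖ = s := by
  rw [norm_mul, norm_e4, mul_one, Complex.norm_real, norm_of_nonneg hs]

lemma lamc_pos {δ t : ℝ} (ht : 1 < t) (hδ1 : δ < 1) : 0 < lamc δ t := by
  have hlt : t ^ (δ - 1) < 1 := rpow_lt_one_of_one_lt_of_neg ht (by linarith)
  exact div_pos (rpow_pos_of_pos (by linarith) _) (by linarith)

lemma phase_ofReal_mul_e4 (δ t Λ s : ℝ) :
    phase δ t Λ (s * e4) =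
      Complex.exp (-(lamc δ t * t / 2 : ℝ) * s ^ 2 + Complex.I * (lamc δ t * t / 2 : ℝ) *
        (2 * log (1 + Λ) / (1 + lamc δ t) : ℝ) * e4 * s) := by
  rw [phase, mul_pow, e4_sq]
  congr 1
  linear_combination ((lamc δ t * t / 2 : ℝ) : ℂ) * (s : ℂ) ^ 2 * Complex.I_sq

lemma hasGaussianDecay_phase {δ t : ℝ} (ht : 1 < t) (hδ1 : δ < 1) (Λ : ℝ) :
    HasGaussianDecay fun s : ℝ => phase δ t Λ (s * e4) := by
  simp_rw [phase_ofReal_mul_e4]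
  exact hasGaussianDecay_cexp (by have := lamc_pos ht hδ1; positivity) _

lemma continuous_phase (δ t Λ : ℝ) : Continuous (phase δ t Λ) := by
  unfold phase
  fun_prop

lemma phase_add_ofReal_mul_e4 (δ t Λ s r : ℝ) :
    phase δ t Λ (s * e4 + r * e4) = phase δ t Λ ((s + r : ℝ) * e4) := by
  rw [Complex.ofReal_add, add_mul]

lemma Phi_ofReal_mul_e4 (δ t Λ s : ℝ) :
    Phi δ t Λ (s * e4) = e4 * ∫ x in Ioi s, phase δ t Λ (x * e4) := by
  simp only [Phi, phase_add_ofReal_mul_e4, integral_const_mul]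
  rw [setIntegral_Ioi_zero_comp_const_add (fun x : ℝ => phase δ t Λ (x * e4))]

lemma norm_le_on_ray {H : ℂ → ℂ} {A p : ℝ} (hH : ∀ u ∈ ray, ‖H u‖ ≤ A * (1 + ‖u‖) ^ p)
    {s : ℝ} (hs : 0 ≤ s) : ‖H (s * e4)‖ ≤ A * (1 + s) ^ p := by
  simpa only [norm_ofReal_mul_e4 hs] using hH _ ⟨s, hs, rfl⟩

section HolomorphicNearRay

variable {V : Set ℂ} {G : ℂ → ℂ} (hV : IsOpen V) (hrayV : ray ⊆ V)
  (hG : DifferentiableOn ℂ G V)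
include hV hrayV hG

lemma hasDerivAt_comp_ofReal_mul_e4 {s : ℝ} (hs : 0 ≤ s) :
    HasDerivAt (fun r : ℝ => G (r * e4)) (deriv G (s * e4) * e4) s :=
  hasDerivAt_comp_ofReal_mul (hG.differentiableAt (hV.mem_nhds (hrayV ⟨s, hs, rfl⟩)))

lemma continuousOn_deriv_comp_ofReal_mul_e4 :
    ContinuousOn (fun s : ℝ => deriv G (s * e4) * e4) (Ici 0) :=
  ((hG.deriv hV).continuousOn.comp (by fun_prop) fun s hs => hrayV ⟨s, hs, rfl⟩).mul
    continuousOn_const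

end HolomorphicNearRay

theorem stmt_4_general (δ t Λ : ℝ) (ht : 1 < t) (hδ1 : δ < 1)
    (V : Set ℂ) (hV : IsOpen V) (hrayV : ray ⊆ V)
    (G : ℂ → ℂ) (hG : DifferentiableOn ℂ G V)
    (A p : ℝ)
    (hGbound : ∀ u ∈ ray, ‖G u‖ ≤ A * (1 + ‖u‖) ^ p)
    (hGbound' : ∀ u ∈ ray, ‖deriv G u‖ ≤ A * (1 + ‖u‖) ^ p) :
    IntegrableOn (fun r : ℝ => e4 * (G ((r : ℂ) * e4) * phase δ t Λ ((r : ℂ) * e4)))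
        (Set.Ioi 0) ∧
      (∀ u ∈ ray, IntegrableOn (fun r : ℝ => e4 * phase δ t Λ (u + (r : ℂ) * e4))
        (Set.Ioi 0)) ∧
      IntegrableOn (fun r : ℝ => e4 * (deriv G ((r : ℂ) * e4) * Phi δ t Λ ((r : ℂ) * e4)))
        (Set.Ioi 0) ∧
      (∫ r in Set.Ioi (0 : ℝ), e4 * (G ((r : ℂ) * e4) * phase δ t Λ ((r : ℂ) * e4))) =
        G 0 * Phi δ t Λ 0 +
          ∫ r in Set.Ioi (0 : ℝ),
            e4 * (deriv G ((r : ℂ) * e4) * Phi δ t Λ ((r : ℂ) * e4)) := by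
  set f : ℝ → ℂ := fun s => phase δ t Λ (s * e4)
  have hfc : Continuous f := (continuous_phase δ t Λ).comp (by fun_prop)
  have hfd : HasGaussianDecay f := hasGaussianDecay_phase ht hδ1 Λ
  have hfi : IntegrableOn f (Ioi 0) := hfd.integrableOn hfc.continuousOn
  have hg (s : ℝ) (hs : 0 ≤ s) := hasDerivAt_comp_ofReal_mul_e4 hV hrayV hG hs
  have hg'c := continuousOn_deriv_comp_ofReal_mul_e4 hV hrayV hG
  have hgb (s : ℝ) (hs : 0 ≤ s) := norm_le_on_ray hGbound hs
  have hg'b (s : ℝ) (hs : 0 ≤ s) : ‖deriv G (s * e4) * e4‖ ≤ A * (1 + s) ^ p := by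
    simpa only [norm_mul, norm_e4, mul_one] using norm_le_on_ray hGbound' hs
  have hPhi (s : ℝ) : e4 * (deriv G (s * e4) * Phi δ t Λ (s * e4)) =
      e4 * (deriv G (s * e4) * e4 * ∫ x in Ioi s, f x) := by
    rw [Phi_ofReal_mul_e4]; ring
  have hgc : ContinuousOn (fun s : ℝ => G (s * e4)) (Ici 0) := fun s hs =>
    (hg s hs).continuousAt.continuousWithinAt
  refine ⟨(hfd.integrableOn_mul hfc.continuousOn hgc hgb).const_mul e4, ?_, ?_, ?_⟩
  · rintro _ ⟨s, hs, rfl⟩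
    simp only [phase_add_ofReal_mul_e4]
    exact (IntegrableOn.comp_const_add_Ioi (hfi.mono_set (Ioi_subset_Ioi hs))).const_mul e4
  · simp only [hPhi]
    exact (hfd.integral_Ioi.integrableOn_mul
      (continuous_integral_Ioi hfc hfi).continuousOn hg'c hg'b).const_mul e4
  · have hPhi0 : Phi δ t Λ 0 = e4 * ∫ x in Ioi 0, f x := by
      simpa using Phi_ofReal_mul_e4 δ t Λ 0
    simp only [hPhi, hPhi0, integral_const_mul]
    rw [integral_Ioi_mul_eq_add_integral_mul_integral_Ioi hfc hfd hg hg'c hgb hg'b]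
    simp only [Complex.ofReal_zero, zero_mul]
    ring

/-- one integration by parts for ray integrals against the phase. -/
theorem stmt_4 (δ t Λ : ℝ) (ht : 1 < t) (hδ0 : 0 < δ) (hδ1 : δ < 1) (hΛ : 0 ≤ Λ)
    (V : Set ℂ) (hV : IsOpen V) (hrayV : ray ⊆ V)
    (G : ℂ → ℂ) (hG : DifferentiableOn ℂ G V)
    (A p : ℝ) (hA : 0 < A) (hp : 0 ≤ p)
    (hGbound : ∀ u ∈ ray, ‖G u‖ ≤ A * (1 + ‖u‖) ^ p)
    (hGbound' : ∀ u ∈ ray, ‖deriv G u‖ ≤ A * (1 + ‖u‖) ^ p) :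
    IntegrableOn (fun r : ℝ => e4 * (G ((r : ℂ) * e4) * phase δ t Λ ((r : ℂ) * e4)))
        (Set.Ioi 0) ∧
      (∀ u ∈ ray, IntegrableOn (fun r : ℝ => e4 * phase δ t Λ (u + (r : ℂ) * e4))
        (Set.Ioi 0)) ∧
      IntegrableOn (fun r : ℝ => e4 * (deriv G ((r : ℂ) * e4) * Phi δ t Λ ((r : ℂ) * e4)))
        (Set.Ioi 0) ∧
      (∫ r in Set.Ioi (0 : ℝ), e4 * (G ((r : ℂ) * e4) * phase δ t Λ ((r : ℂ) * e4))) =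
        G 0 * Phi δ t Λ 0 +
          ∫ r in Set.Ioi (0 : ℝ),
            e4 * (deriv G ((r : ℂ) * e4) * Phi δ t Λ ((r : ℂ) * e4)) :=
  stmt_4_general δ t Λ ht hδ1 V hV hrayV G hG A p hGbound hGbound'
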